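/- Let J_∞ ⊆ P be the ideal generated by {Dⁱ(g₁) : i ≥ 0} ∪ {Dⁱ(g₂) : i ≥ 0}, where g₁ = w⁽⁰⁾(w⁽⁰⁾ − (ℓ⁽⁰⁾)²) and g₂ = (ℓ⁽⁰⁾)³w⁽⁰⁾. Let r = ℓ⁽⁰⁾ℓ⁽²⁾w⁽⁰⁾ + (ℓ⁽¹⁾)²w⁽⁰⁾ − (1/2)(ℓ⁽⁰⁾)²w⁽²⁾ ∈ P. Then r ∉ J_∞; in particular the image of r in P/J_∞ is a nonzero nilpotent element. -/

import Mathlib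

/-!
Write `a = w`, `b = w - ℓ²` and `′` for `D`, so that `g₁ = a b` and `2 r = a″ b - a b″`. An
elementary identity puts `(a″ b - a b″)³` in the ideal generated by `a b`, `(a b)′`, `(a b)″`,
so `r³ ∈ J_∞`.

Give `ℓ⁽ⁱ⁾` the bidegree `(1, i)` and `w⁽ⁱ⁾` the bidegree `(2, i)`. Then `Dⁱ g₁` and `Dⁱ g₂` are
bihomogeneous of bidegrees `(4, i)` and `(5, i)`, and `r` of bidegree `(4, 2)`. Hence the
`(4, 2)`-component of an element of `J_∞` lies in every ideal containing `g₁`, `D g₁`, `D² g₁`.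
One such ideal consists of the polynomials vanishing to order three at a suitable `ℂ[t]`-point,
at which `r` takes the value `t²`; so `r ∉ J_∞`.
-/

open MvPolynomial

noncomputable section

/-- The polynomial ring `P = ℂ[ℓ⁽⁰⁾, ℓ⁽¹⁾, …, w⁽⁰⁾, w⁽¹⁾, …]`:
variables are indexed by `Fin 2 × ℕ`, where `(0, i)` is `ℓ⁽ⁱ⁾` and `(1, i)` is `w⁽ⁱ⁾`. -/
abbrev P : Type := MvPolynomial (Fin 2 × ℕ) ℂ

/-- The unique ℂ-linear derivation `D : P → P` with `D(ℓ⁽ⁱ⁾) = ℓ⁽ⁱ⁺¹⁾`, `D(w⁽ⁱ⁾) = w⁽ⁱ⁺¹⁾`. -/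
def D : Derivation ℂ P P :=
  MvPolynomial.mkDerivation ℂ (fun p : Fin 2 × ℕ => (X (p.1, p.2 + 1) : P))

/-- `ℓ⁽ⁱ⁾` -/
def lv (i : ℕ) : P := X (0, i)

/-- `w⁽ⁱ⁾` -/
def wv (i : ℕ) : P := X (1, i)

/-- `g₁ = w⁽⁰⁾(w⁽⁰⁾ − (ℓ⁽⁰⁾)²)`. -/
def g₁ : P := wv 0 * (wv 0 - lv 0 ^ 2)

/-- `g₂ = (ℓ⁽⁰⁾)³w⁽⁰⁾`. -/
def g₂ : P := lv 0 ^ 3 * wv 0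

/-- The ideal `J_∞` generated by all `Dⁱ(g₁)` and `Dⁱ(g₂)`, `i ≥ 0`. -/
def Jinf : Ideal P :=
  Ideal.span ((Set.range fun i : ℕ => (⇑D)^[i] g₁) ∪ (Set.range fun i : ℕ => (⇑D)^[i] g₂))

/-- `r = ℓ⁽⁰⁾ℓ⁽²⁾w⁽⁰⁾ + (ℓ⁽¹⁾)²w⁽⁰⁾ − (1/2)(ℓ⁽⁰⁾)²w⁽²⁾`. -/
def r : P := lv 0 * lv 2 * wv 0 + lv 1 ^ 2 * wv 0 - C ((1 : ℂ)/2) * lv 0 ^ 2 * wv 2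

theorem cube_eq_zero_of_jet_mul_eq_zero {R : Type*} [CommRing R] {x₀ x₁ x₂ y₀ y₁ y₂ : R}
    (h₀ : x₀ * y₀ = 0) (h₁ : x₁ * y₀ + x₀ * y₁ = 0)
    (h₂ : x₂ * y₀ + 2 * (x₁ * y₁) + x₀ * y₂ = 0) :
    (x₂ * y₀ - x₀ * y₂) ^ 3 = 0 := by
  have hsq : (x₂ * y₀ - x₀ * y₂) ^ 2 = 4 * (x₁ * y₁) ^ 2 := by
    linear_combination (x₂ * y₀ + x₀ * y₂ - 2 * (x₁ * y₁)) * h₂ - 4 * x₂ * y₂ * h₀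
  have hc : x₁ * y₁ * (x₂ * y₀) ^ 2 = 0 := by
    linear_combination x₂ ^ 2 * y₀ * y₁ * h₁ - x₂ ^ 2 * y₁ ^ 2 * h₀
  have ha : x₁ * y₁ * (x₀ * y₂) ^ 2 = 0 := by
    linear_combination x₀ * x₁ * y₂ ^ 2 * h₁ - x₁ ^ 2 * y₂ ^ 2 * h₀
  -- `h₂` turns `4 (x₁y₁)² (x₂y₀ - x₀y₂)` into `2 x₁y₁ ((x₀y₂)² - (x₂y₀)²)`.
  linear_combination (x₂ * y₀ - x₀ * y₂) * hsq
    + 2 * (x₁ * y₁) * (x₂ * y₀ - x₀ * y₂) * h₂ - 2 * hc + 2 * ha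

namespace Derivation

variable {R A : Type*} [CommRing R] [CommRing A] [Algebra R A] (d : Derivation R A A)

theorem map_map_mul (a b : A) :
    d (d (a * b)) = d (d a) * b + 2 * (d a * d b) + a * d (d b) := by
  simp only [leibniz, smul_eq_mul, map_add]
  ring

theorem pow_three_mem_span (a b : A) :
    (d (d a) * b - a * d (d b)) ^ 3 ∈ Ideal.span {a * b, d (a * b), d (d (a * b))} := by
  set I := Ideal.span {a * b, d (a * b), d (d (a * b))}
  have hI : ∀ x ∈ ({a * b, d (a * b), d (d (a * b))} : Set A), Ideal.Quotient.mk I x = 0 :=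
    fun x hx ↦ Ideal.Quotient.eq_zero_iff_mem.mpr (Ideal.subset_span hx)
  have h₀ := hI (a * b) (by simp)
  have h₁ := hI (d (a * b)) (by simp)
  have h₂ := hI (d (d (a * b))) (by simp)
  rw [leibniz, smul_eq_mul, smul_eq_mul] at h₁
  rw [map_map_mul] at h₂
  simp only [map_add, map_mul, map_ofNat] at h₀ h₁ h₂
  rw [← Ideal.Quotient.eq_zero_iff_mem, map_pow, map_sub, map_mul, map_mul]
  exact cube_eq_zero_of_jet_mul_eq_zero h₀ (by linear_combination h₁) h₂

end Derivation

section WeightedHomogeneous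

variable {σ R M : Type*} [CommSemiring R] [AddCommMonoid M] {w : σ → M}

theorem MvPolynomial.IsWeightedHomogeneous.mkDerivation {f : σ → MvPolynomial σ R} {δ : M}
    (hf : ∀ i, IsWeightedHomogeneous w (f i) (w i + δ)) {q : MvPolynomial σ R} {m : M}
    (hq : IsWeightedHomogeneous w q m) :
    IsWeightedHomogeneous w (mkDerivation R f q) (m + δ) := by
  rw [← q.support_sum_monomial_coeff, map_sum]
  refine IsWeightedHomogeneous.sum _ _ _ fun s hs ↦ ?_
  rw [mkDerivation_monomial]
  refine (weightedHomogeneousSubmodule R w _).smul_mem _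
    (IsWeightedHomogeneous.sum _ _ _ fun i hi ↦ ?_)
  have hle : Finsupp.single i 1 ≤ s :=
    Finsupp.single_le_iff.mpr (Nat.one_le_iff_ne_zero.mpr (Finsupp.mem_support_iff.mp hi))
  have hweight : Finsupp.weight w (s - Finsupp.single i 1) + w i = m := by
    rw [← hq (mem_support_iff.mp hs), ← one_smul ℕ (w i), ← Finsupp.weight_single, ← map_add,
      tsub_add_cancel_of_le hle]
  dsimp only
  rw [smul_eq_mul, ← hweight, add_assoc]
  exact (isWeightedHomogeneous_monomial _ _ _ rfl).mul (hf i)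

variable [PartialOrder M] [CanonicallyOrderedAdd M] [Sub M] [OrderedSub M] [AddLeftReflectLE M]

attribute [local instance] weightedGradedAlgebra in
theorem MvPolynomial.weightedHomogeneousComponent_mul_of_isWeightedHomogeneous
    {q : MvPolynomial σ R} {n : M} (hq : IsWeightedHomogeneous w q n)
    (p : MvPolynomial σ R) (m : M) [Decidable (n ≤ m)] :
    weightedHomogeneousComponent w m (p * q) =
      if n ≤ m then weightedHomogeneousComponent w (m - n) p * q else 0 := by
  classical
  simp_rw [← weightedDecomposition.decompose'_apply]
  exact DirectSum.coe_decompose_mul_of_right_mem _ m hq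

theorem MvPolynomial.weightedHomogeneousComponent_mem_of_mem_span {S : Set (MvPolynomial σ R)}
    {K : Ideal (MvPolynomial σ R)} {m : M}
    (hS : ∀ s ∈ S, ∃ n, IsWeightedHomogeneous w s n ∧ (n ≤ m → s ∈ K))
    {x : MvPolynomial σ R} (hx : x ∈ Ideal.span S) : weightedHomogeneousComponent w m x ∈ K := by
  classical
  suffices ∀ p, weightedHomogeneousComponent w m (p * x) ∈ K by simpa using this 1
  induction hx using Submodule.span_induction with
  | mem s hs =>
    intro p
    obtain ⟨n, hn, hK⟩ := hS s hs
    rw [weightedHomogeneousComponent_mul_of_isWeightedHomogeneous hn]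
    split_ifs with hle
    exacts [K.mul_mem_left _ (hK hle), K.zero_mem]
  | zero => simp
  | add x y _ _ hx hy =>
    intro p
    rw [mul_add, map_add]
    exact K.add_mem (hx p) (hy p)
  | smul a x _ hx =>
    intro p
    rw [smul_eq_mul, ← mul_assoc]
    exact hx _

end WeightedHomogeneous

/-- `ℓ⁽ⁱ⁾ = X (0, i)` gets weight `(1, i)` and `w⁽ⁱ⁾ = X (1, i)` gets weight `(2, i)`. -/
def arcWeight (p : Fin 2 × ℕ) : ℕ × ℕ := ((p.1 : ℕ) + 1, p.2)

theorem D_X (p : Fin 2 × ℕ) : D (X p) = X (p.1, p.2 + 1) :=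
  mkDerivation_X ℂ _ p

theorem D_lv (i : ℕ) : D (lv i) = lv (i + 1) := D_X _

theorem D_wv (i : ℕ) : D (wv i) = wv (i + 1) := D_X _

theorem isWeightedHomogeneous_lv (i : ℕ) : IsWeightedHomogeneous arcWeight (lv i) (1, i) :=
  isWeightedHomogeneous_X ℂ arcWeight _

theorem isWeightedHomogeneous_wv (i : ℕ) : IsWeightedHomogeneous arcWeight (wv i) (2, i) :=
  isWeightedHomogeneous_X ℂ arcWeight _

theorem isWeightedHomogeneous_iterate_D {q : P} {a b : ℕ}
    (hq : IsWeightedHomogeneous arcWeight q (a, b)) (i : ℕ) :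
    IsWeightedHomogeneous arcWeight ((⇑D)^[i] q) (a, b + i) := by
  induction i with
  | zero => exact hq
  | succ i ih =>
    rw [Function.iterate_succ_apply']
    exact ih.mkDerivation (δ := (0, 1)) fun _ ↦ isWeightedHomogeneous_X ℂ arcWeight _

theorem isWeightedHomogeneous_wv_sub_lv_sq :
    IsWeightedHomogeneous arcWeight (wv 0 - lv 0 ^ 2) (2, 0) := by
  have hl := isWeightedHomogeneous_lv 0
  rw [sq]
  exact Submodule.sub_mem (weightedHomogeneousSubmodule ℂ arcWeight (2, 0))
    (isWeightedHomogeneous_wv 0) (hl.mul hl)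

theorem isWeightedHomogeneous_g₁ : IsWeightedHomogeneous arcWeight g₁ (4, 0) :=
  (isWeightedHomogeneous_wv 0).mul isWeightedHomogeneous_wv_sub_lv_sq

theorem isWeightedHomogeneous_g₂ : IsWeightedHomogeneous arcWeight g₂ (5, 0) := by
  have hl := isWeightedHomogeneous_lv 0
  rw [g₂, pow_three]
  exact ((hl.mul (hl.mul hl)).mul (isWeightedHomogeneous_wv 0) :)

theorem r_eq :
    r = C (1 / 2) * (D (D (wv 0)) * (wv 0 - lv 0 ^ 2) - wv 0 * D (D (wv 0 - lv 0 ^ 2))) := by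
  have h : (C (1 / 2) * 2 : P) = 1 := by rw [← map_ofNat C 2, ← C_mul]; norm_num
  simp only [r, sq, D_wv, D_lv, map_sub, Derivation.leibniz, smul_eq_mul, map_add]
  linear_combination -(lv 0 * lv 2 * wv 0 + lv 1 * lv 1 * wv 0) * h

theorem isWeightedHomogeneous_r : IsWeightedHomogeneous arcWeight r (4, 2) := by
  have ha := isWeightedHomogeneous_wv 0
  have hb := isWeightedHomogeneous_wv_sub_lv_sq
  rw [r_eq]
  exact ((isWeightedHomogeneous_C _ _).mul
    (Submodule.sub_mem (weightedHomogeneousSubmodule ℂ arcWeight (4, 2))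
      ((isWeightedHomogeneous_iterate_D ha 2).mul hb)
      (ha.mul (isWeightedHomogeneous_iterate_D hb 2))) :)

theorem r_pow_three_mem_Jinf : r ^ 3 ∈ Jinf := by
  rw [r_eq, mul_pow]
  refine Jinf.mul_mem_left _ (Ideal.span_le.mpr ?_ (D.pow_three_mem_span _ _))
  rintro - (rfl | rfl | rfl)
  exacts [Ideal.subset_span (Or.inl ⟨0, rfl⟩), Ideal.subset_span (Or.inl ⟨1, rfl⟩),
    Ideal.subset_span (Or.inl ⟨2, rfl⟩)]

/-- With `a = w` and `b = w - ℓ²`, the jets `(a, a′, a″) = (t², t, -2)` and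
`(b, b′, b″) = (0, t, -2)` give `g₁, D g₁, D² g₁` the values `0, t³, 0` and `r` the value `t²`. -/
def testJet : Fin 2 × ℕ → Polynomial ℂ
  | (0, 0) => Polynomial.X
  | (1, 0) => Polynomial.X ^ 2
  | (1, 1) => Polynomial.X
  | (1, 2) => -2
  | _ => 0

def testIdeal : Ideal P := (Ideal.span {Polynomial.X ^ 3}).comap (aeval testJet)

theorem iterate_D_g₁_mem_testIdeal {i : ℕ} (hi : i ≤ 2) : (⇑D)^[i] g₁ ∈ testIdeal := by
  rw [testIdeal, Ideal.mem_comap, Ideal.mem_span_singleton]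
  interval_cases i <;>
    simp only [g₁, sq, Function.iterate_succ_apply', Function.iterate_zero_apply,
      Derivation.leibniz, smul_eq_mul, map_mul, map_sub, map_add, D_lv, D_wv] <;>
    simp only [lv, wv, aeval_X, testJet]
  exacts [⟨0, by ring⟩, ⟨1, by ring⟩, ⟨0, by ring⟩]

theorem r_notMem_testIdeal : r ∉ testIdeal := by
  rw [testIdeal, Ideal.mem_comap, Ideal.mem_span_singleton]
  have h2 : (Polynomial.C (1 / 2) * 2 : Polynomial ℂ) = 1 := by
    rw [← map_ofNat Polynomial.C 2, ← Polynomial.C_mul]; norm_num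
  have hr : aeval testJet r = Polynomial.X ^ 2 := by
    simp only [r, lv, wv, map_add, map_sub, map_mul, map_pow, aeval_X, aeval_C, testJet,
      Polynomial.algebraMap_eq]
    linear_combination Polynomial.X ^ 2 * h2
  rw [hr, pow_dvd_pow_iff Polynomial.X_ne_zero Polynomial.not_isUnit_X]
  norm_num

/-- `r ∉ J_∞`; in particular the image of `r` in `P/J_∞` is a nonzero nilpotent element. -/
theorem r_not_mem_Jinf :
    r ∉ Jinf ∧ Ideal.Quotient.mk Jinf r ≠ 0 ∧ IsNilpotent (Ideal.Quotient.mk Jinf r) := by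
  have hgen : ∀ s ∈ (Set.range fun i : ℕ => (⇑D)^[i] g₁) ∪ (Set.range fun i : ℕ => (⇑D)^[i] g₂),
      ∃ n, IsWeightedHomogeneous arcWeight s n ∧ (n ≤ (4, 2) → s ∈ testIdeal) := by
    rintro - (⟨i, rfl⟩ | ⟨i, rfl⟩)
    · refine ⟨(4, i), ?_, fun h ↦ iterate_D_g₁_mem_testIdeal h.2⟩
      simpa using isWeightedHomogeneous_iterate_D isWeightedHomogeneous_g₁ i
    · refine ⟨(5, i), ?_, fun h ↦ absurd h.1 (by norm_num)⟩
      simpa using isWeightedHomogeneous_iterate_D isWeightedHomogeneous_g₂ i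
  have hr : r ∉ Jinf := fun h ↦ r_notMem_testIdeal <|
    isWeightedHomogeneous_r.weightedHomogeneousComponent_same ▸
      weightedHomogeneousComponent_mem_of_mem_span hgen h
  refine ⟨hr, fun h ↦ hr (Ideal.Quotient.eq_zero_iff_mem.mp h), 3, ?_⟩
  rw [← map_pow, Ideal.Quotient.eq_zero_iff_mem]
  exact r_pow_three_mem_Jinf
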